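/- Let f : ℂ → ℂ be an open continuous map (e.g., a non-constant entire function) and let A ⊆ ℂ be a closed, connected, unbounded set. Then every connected component of f⁻¹(A) is unbounded. -/

import Mathlib

/-!
Suppose the component `C` of `z` in the closed set `F = f⁻¹(A)` is bounded, hence compact. By
the Šura-Bura argument `C` has a compact neighbourhood in `F` that is open in `F`, and fattening
it gives a bounded open `U ∋ z` whose frontier misses `F`. Then `f(U)` and the complement of the
compact set `f(closure U)` are disjoint open sets covering `A`, the first one meets `A` at `f z`,
so the connected set `A` lies in `f(closure U)` and is bounded.
-/

open Set Topology

variable {X Y : Type*} [TopologicalSpace X] [TopologicalSpace Y]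

theorem isClosed_connectedComponentIn {F : Set X} (hF : IsClosed F) (x : X) :
    IsClosed (connectedComponentIn F x) := by
  refine closure_subset_iff_isClosed.1 ?_
  by_cases hx : x ∈ F
  · exact isPreconnected_connectedComponentIn.closure.subset_connectedComponentIn
      (subset_closure (mem_connectedComponentIn hx))
      (closure_minimal (connectedComponentIn_subset F x) hF)
  · rw [connectedComponentIn_eq_empty hx, closure_empty]

theorem exists_isClopen_mem_subset_of_connectedComponent_subset [CompactSpace X] [T2Space X]
    {x : X} {U : Set X} (hU : IsOpen U) (hxU : connectedComponent x ⊆ U) :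
    ∃ V, IsClopen V ∧ x ∈ V ∧ V ⊆ U := by
  let N := {s : Set X // IsClopen s ∧ x ∈ s}
  have : Nonempty N := ⟨⟨univ, isClopen_univ, mem_univ x⟩⟩
  have hdir : Directed (· ⊇ ·) fun s : N => s.val := by
    rintro ⟨s, hs, hxs⟩ ⟨t, ht, hxt⟩
    exact ⟨⟨s ∩ t, hs.inter ht, hxs, hxt⟩, inter_subset_left, inter_subset_right⟩
  have hnhds : ∀ y ∈ ⋂ s : N, s.val, U ∈ 𝓝 y := fun y hy =>
    hU.mem_nhds (hxU ((connectedComponent_eq_iInter_isClopen x).symm ▸ hy))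
  obtain ⟨⟨V, hV, hxV⟩, hVU⟩ := exists_subset_nhds_of_compactSpace hdir (fun s => s.2.1.1) hnhds
  exact ⟨V, hV, hxV, hVU⟩

theorem IsClosed.exists_isOpen_mem_isCompact_inter [LocallyCompactSpace X] [T2Space X]
    {F : Set X} (hF : IsClosed F) {z : X} (hz : z ∈ F)
    (hC : IsCompact (connectedComponentIn F z)) :
    ∃ O, IsOpen O ∧ z ∈ O ∧ IsCompact (O ∩ F) := by
  obtain ⟨W, hW, hCW, -, hWc⟩ :=
    exists_open_between_and_isCompact_closure hC isOpen_univ (subset_univ _)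
  set S := F ∩ closure W
  have : CompactSpace S := isCompact_iff_compactSpace.1 (hWc.inter_left hF)
  have hzS : z ∈ S := ⟨hz, subset_closure (hCW (mem_connectedComponentIn hz))⟩
  have hcomp : connectedComponent (⟨z, hzS⟩ : S) ⊆ (↑) ⁻¹' W := by
    intro p hp
    have hpS : (p : X) ∈ connectedComponentIn S z := by
      rw [connectedComponentIn_eq_image hzS]
      exact mem_image_of_mem _ hp
    exact hCW (connectedComponentIn_mono z inter_subset_left hpS)
  obtain ⟨V, hV, hzV, hVW⟩ :=
    exists_isClopen_mem_subset_of_connectedComponent_subset (hW.preimage continuous_subtype_val)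
      hcomp
  obtain ⟨O, hO, rfl⟩ := isOpen_induced_iff.1 hV.isOpen
  refine ⟨O ∩ W, hO.inter hW, ⟨hzV, hCW (mem_connectedComponentIn hz)⟩, ?_⟩
  have hOWF : O ∩ W ∩ F = (↑) '' ((↑) ⁻¹' O : Set S) := by
    ext p
    constructor
    · rintro ⟨⟨hpO, hpW⟩, hpF⟩
      exact ⟨⟨p, hpF, subset_closure hpW⟩, hpO, rfl⟩
    · rintro ⟨q, hqO, rfl⟩
      exact ⟨⟨hqO, hVW hqO⟩, q.2.1⟩
  rw [hOWF]
  exact hV.isClosed.isCompact.image continuous_subtype_val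

theorem exists_isOpen_isCompact_closure_disjoint_frontier [LocallyCompactSpace X]
    [RegularSpace X] {O F : Set X} (hO : IsOpen O) (hK : IsCompact (O ∩ F)) :
    ∃ U, IsOpen U ∧ O ∩ F ⊆ U ∧ IsCompact (closure U) ∧ Disjoint (frontier U) F := by
  obtain ⟨U, hU, hKU, hUO, hUc⟩ :=
    exists_open_between_and_isCompact_closure hK hO inter_subset_left
  refine ⟨U, hU, hKU, hUc, disjoint_left.2 fun y hy hyF => ?_⟩
  rw [hU.frontier_eq] at hy
  exact hy.2 (hKU ⟨hUO hy.1, hyF⟩)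

theorem IsPreconnected.subset_image_of_disjoint_frontier [T2Space Y] {f : X → Y}
    (hc : Continuous f) (ho : IsOpenMap f) {A : Set Y} (hA : IsPreconnected A) {U : Set X}
    (hU : IsOpen U) (hUc : IsCompact (closure U)) (hfr : Disjoint (frontier U) (f ⁻¹' A))
    (hne : (U ∩ f ⁻¹' A).Nonempty) : A ⊆ f '' U := by
  have hcover : A ⊆ f '' U ∪ (f '' closure U)ᶜ := by
    intro a ha
    by_cases hcl : a ∈ f '' closure U
    · obtain ⟨y, hy, rfl⟩ := hcl
      refine Or.inl ⟨y, by_contra fun hyU => ?_, rfl⟩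
      exact disjoint_left.1 hfr (by rw [hU.frontier_eq]; exact ⟨hy, hyU⟩) ha
    · exact Or.inr hcl
  obtain ⟨x, hxU, hxA⟩ := hne
  exact hA.subset_left_of_subset_union (ho U hU) (hUc.image hc).isClosed.isOpen_compl
    (disjoint_compl_right.mono_left (image_mono subset_closure)) hcover
    ⟨f x, hxA, x, hxU, rfl⟩

/-- If `f : ℂ → ℂ` is a continuous open map and `A ⊆ ℂ` is closed, connected and
unbounded, then every connected component of `f⁻¹(A)` is unbounded. -/
theorem stmt_13 (f : ℂ → ℂ) (hc : Continuous f) (ho : IsOpenMap f)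
    (A : Set ℂ) (hA : IsClosed A) (hconn : IsConnected A)
    (hunb : ¬ Bornology.IsBounded A) :
    ∀ z ∈ f ⁻¹' A, ¬ Bornology.IsBounded (connectedComponentIn (f ⁻¹' A) z) := by
  intro z hz hb
  have hF : IsClosed (f ⁻¹' A) := hA.preimage hc
  obtain ⟨O, hO, hzO, hK⟩ := hF.exists_isOpen_mem_isCompact_inter hz
    (Metric.isCompact_of_isClosed_isBounded (isClosed_connectedComponentIn hF z) hb)
  obtain ⟨U, hU, hOU, hUc, hfr⟩ := exists_isOpen_isCompact_closure_disjoint_frontier hO hK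
  have hAU : A ⊆ f '' U := hconn.isPreconnected.subset_image_of_disjoint_frontier hc ho hU hUc
    hfr ⟨z, hOU ⟨hzO, hz⟩, hz⟩
  exact hunb ((hUc.image hc).isBounded.subset (hAU.trans (image_mono subset_closure)))
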